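/- arXiv:1901.00754 — 10 statements merged into one kernel-verified Lean document; each statement's English description precedes it below -/
import Mathlib

section
/- Let P : D × D → {0,1} be a binary predicate on a finite domain D, and suppose there exist two-element subsets B, C ⊆ D such that P|_{B×C} is a singleton. Then for every n ≥ 1 the following CSP(P) instance I has 2n variables and n² constraints and the property that for every 0 < ε < 1 every ε-sparsifier of I contains all n² constraints: the variable set is the disjoint union X ⊔ Y with X = {x₁,...,x_n}, Y = {y₁,...,y_n}, the scope set is {(x_i, y_j) : 1 ≤ i, j ≤ n}, and the weights are arbitrary positive reals. -/
/-- The value of a binary CSP instance with predicate `P`, scope set `S`,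
weights `w`, under assignment `A`. -/
def cspVal {W D : Type*} (P : D → D → Bool) (S : Finset (W × W)) (w : W × W → ℝ)
    (A : W → D) : ℝ :=
  ∑ e ∈ S, w e * (if P (A e.1) (A e.2) then 1 else 0)

/-!
Pick `b₀, b₁ ∈ B` and `c₀, c₁ ∈ C` so that, among the four pairs, `P` holds only at `(b₀, c₀)`.
For the scope `(xᵢ, yⱼ)`, assign `b₀` to `xᵢ`, `c₀` to `yⱼ`, and `b₁`, `c₁` to all other variables:
this assignment satisfies `(xᵢ, yⱼ)` and nothing else. A sparsifier dropping that scope has value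
`0` there, while the instance has value `w(xᵢ, yⱼ) > 0`, contradicting the lower bound.
-/

section Sparsifier

variable {W D : Type*} (P : D → D → Bool)

def Isolates (S : Finset (W × W)) (A : W → D) (e : W × W) : Prop :=
  ∀ e' ∈ S, P (A e'.1) (A e'.2) = true ↔ e' = e

variable {P}

theorem cspVal_eq_zero_of_forall_eq_false {S : Finset (W × W)} {w : W × W → ℝ} {A : W → D}
    (h : ∀ e ∈ S, P (A e.1) (A e.2) = false) : cspVal P S w A = 0 :=
  Finset.sum_eq_zero fun e he => by simp [h e he]

theorem Isolates.cspVal_eq {S : Finset (W × W)} {w : W × W → ℝ} {A : W → D} {e : W × W}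
    (hA : Isolates P S A e) (he : e ∈ S) : cspVal P S w A = w e := by
  rw [cspVal, Finset.sum_eq_single_of_mem e he fun e' he' hne => by simp [(hA e' he').not.2 hne]]
  simp [(hA e he).2 rfl]

theorem Isolates.cspVal_eq_zero {S S' : Finset (W × W)} {w : W × W → ℝ} {A : W → D}
    {e : W × W} (hA : Isolates P S A e) (hsub : S' ⊆ S) (he : e ∉ S') : cspVal P S' w A = 0 :=
  cspVal_eq_zero_of_forall_eq_false fun e' he' =>
    Bool.eq_false_iff.2 fun h => he ((hA e' (hsub he')).1 h ▸ he')

theorem eq_of_subset_of_forall_exists_isolates {S S' : Finset (W × W)} {w w' : W × W → ℝ}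
    {ε : ℝ} (hε : ε < 1) (hw : ∀ e ∈ S, 0 < w e) (hisol : ∀ e ∈ S, ∃ A, Isolates P S A e)
    (hsub : S' ⊆ S) (hlow : ∀ A, (1 - ε) * cspVal P S w A ≤ cspVal P S' w' A) : S' = S := by
  refine hsub.antisymm fun e he => ?_
  by_contra he'
  obtain ⟨A, hA⟩ := hisol e he
  have := hlow A
  rw [hA.cspVal_eq he, hA.cspVal_eq_zero hsub he'] at this
  nlinarith [hw e he]

end Sparsifier

theorem exists_and_pattern_of_existsUnique {D : Type*} {P : D → D → Bool} {B C : Finset D}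
    (hB : B.card = 2) (hC : C.card = 2)
    (hsing : ∃! p : D × D, p.1 ∈ B ∧ p.2 ∈ C ∧ P p.1 p.2 = true) :
    ∃ b₀ b₁ c₀ c₁ : D,
      P b₀ c₀ = true ∧ P b₀ c₁ = false ∧ P b₁ c₀ = false ∧ P b₁ c₁ = false := by
  obtain ⟨⟨b₀, c₀⟩, ⟨hb₀, hc₀, hP⟩, huniq⟩ := hsing
  obtain ⟨b₁, hb₁, hb₁ne⟩ := Finset.exists_mem_ne (s := B) (by omega) b₀
  obtain ⟨c₁, hc₁, hc₁ne⟩ := Finset.exists_mem_ne (s := C) (by omega) c₀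
  have hfalse : ∀ b ∈ B, ∀ c ∈ C, (b, c) ≠ (b₀, c₀) → P b c = false := fun b hb c hc hne =>
    Bool.eq_false_iff.2 fun h => hne (huniq (b, c) ⟨hb, hc, h⟩)
  exact ⟨b₀, b₁, c₀, c₁, hP, hfalse _ hb₀ _ hc₁ (by simp [hc₁ne]),
    hfalse _ hb₁ _ hc₀ (by simp [hb₁ne]), hfalse _ hb₁ _ hc₁ (by simp [hb₁ne])⟩

section Bipartite

variable (ι κ : Type*) [Fintype ι] [Fintype κ] [DecidableEq ι] [DecidableEq κ]

/-- The scopes `(xᵢ, yⱼ)` of the complete bipartite instance on `X ⊔ Y` with `X = ι`, `Y = κ`. -/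
def bipartiteScopes : Finset ((ι ⊕ κ) × (ι ⊕ κ)) :=
  (Finset.univ : Finset (ι × κ)).image fun p => (Sum.inl p.1, Sum.inr p.2)

theorem card_bipartiteScopes :
    (bipartiteScopes ι κ).card = Fintype.card ι * Fintype.card κ := by
  rw [bipartiteScopes, Finset.card_image_of_injective _ fun p q h => by aesop]
  simp

variable {ι κ} {D : Type*} {P : D → D → Bool}

theorem exists_isolates_bipartiteScopes {b₀ b₁ c₀ c₁ : D} (h₀₀ : P b₀ c₀ = true)
    (h₀₁ : P b₀ c₁ = false) (h₁₀ : P b₁ c₀ = false) (h₁₁ : P b₁ c₁ = false) :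
    ∀ e ∈ bipartiteScopes ι κ, ∃ A, Isolates P (bipartiteScopes ι κ) A e := by
  simp only [bipartiteScopes, Finset.mem_image, Finset.mem_univ, true_and, forall_exists_index]
  rintro _ ⟨i, j⟩ rfl
  refine ⟨Sum.elim (fun k => if k = i then b₀ else b₁) (fun l => if l = j then c₀ else c₁), ?_⟩
  simp only [Isolates, Finset.mem_image, Finset.mem_univ, true_and, forall_exists_index]
  rintro _ ⟨k, l⟩ rfl
  simp only [Sum.elim_inl, Sum.elim_inr, Prod.mk.injEq, Sum.inl.injEq, Sum.inr.injEq]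
  split_ifs <;> simp_all

end Bipartite

theorem stmt1_general {D : Type} (P : D → D → Bool)
    (B C : Finset D) (hB : B.card = 2) (hC : C.card = 2)
    (hsing : ∃! p : D × D, p.1 ∈ B ∧ p.2 ∈ C ∧ P p.1 p.2 = true)
    (n : ℕ)
    (S : Finset ((Fin n ⊕ Fin n) × (Fin n ⊕ Fin n)))
    (hS : S = (Finset.univ : Finset (Fin n × Fin n)).image
      (fun p => (Sum.inl p.1, Sum.inr p.2)))
    (w : (Fin n ⊕ Fin n) × (Fin n ⊕ Fin n) → ℝ)
    (hw : ∀ e ∈ S, 0 < w e) :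
    Fintype.card (Fin n ⊕ Fin n) = 2 * n ∧ S.card = n ^ 2 ∧
    ∀ ε : ℝ, 0 < ε → ε < 1 →
      ∀ (S' : Finset ((Fin n ⊕ Fin n) × (Fin n ⊕ Fin n)))
        (w' : (Fin n ⊕ Fin n) × (Fin n ⊕ Fin n) → ℝ),
        S' ⊆ S → (∀ e ∈ S', 0 < w' e) →
        (∀ A : (Fin n ⊕ Fin n) → D,
          (1 - ε) * cspVal P S w A ≤ cspVal P S' w' A ∧
          cspVal P S' w' A ≤ (1 + ε) * cspVal P S w A) →
        S' = S := by
  obtain ⟨b₀, b₁, c₀, c₁, h₀₀, h₀₁, h₁₀, h₁₁⟩ := exists_and_pattern_of_existsUnique hB hC hsing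
  change S = bipartiteScopes (Fin n) (Fin n) at hS
  subst hS
  refine ⟨by simp [two_mul], by simp [card_bipartiteScopes, sq], ?_⟩
  intro ε _ hε S' w' hsub _ hbound
  exact eq_of_subset_of_forall_exists_isolates hε hw
    (exists_isolates_bipartiteScopes h₀₀ h₀₁ h₁₀ h₁₁) hsub fun A => (hbound A).1

/-- if `P` restricted to some `B × C` with `|B| = |C| = 2` is a
singleton, then the complete bipartite instance on `X ⊔ Y` with `|X| = |Y| = n`
has `2n` variables and `n²` constraints, and every ε-sparsifier of it must keep
all `n²` constraints. -/
theorem stmt1 {D : Type} [Fintype D] [DecidableEq D] (P : D → D → Bool)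
    (B C : Finset D) (hB : B.card = 2) (hC : C.card = 2)
    (hsing : ∃! p : D × D, p.1 ∈ B ∧ p.2 ∈ C ∧ P p.1 p.2 = true)
    (n : ℕ) (hn : 1 ≤ n)
    (S : Finset ((Fin n ⊕ Fin n) × (Fin n ⊕ Fin n)))
    (hS : S = (Finset.univ : Finset (Fin n × Fin n)).image
      (fun p => (Sum.inl p.1, Sum.inr p.2)))
    (w : (Fin n ⊕ Fin n) × (Fin n ⊕ Fin n) → ℝ)
    (hw : ∀ e ∈ S, 0 < w e) :
    Fintype.card (Fin n ⊕ Fin n) = 2 * n ∧ S.card = n ^ 2 ∧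
    ∀ ε : ℝ, 0 < ε → ε < 1 →
      ∀ (S' : Finset ((Fin n ⊕ Fin n) × (Fin n ⊕ Fin n)))
        (w' : (Fin n ⊕ Fin n) × (Fin n ⊕ Fin n) → ℝ),
        S' ⊆ S → (∀ e ∈ S', 0 < w' e) →
        (∀ A : (Fin n ⊕ Fin n) → D,
          (1 - ε) * cspVal P S w A ≤ cspVal P S' w' A ∧
          cspVal P S' w' A ≤ (1 + ε) * cspVal P S w A) →
        S' = S :=
  stmt1_general P B C hB hC hsing n S hS w hw
end

section
/- Let G be a bipartite graph with parts U and V, |U| = |V| = r ≥ 2, all edges of G joining a vertex of U to a vertex of V. Suppose that for all distinct u, u' ∈ U and all distinct v, v' ∈ V, the number of edges of G with both endpoints in {u, u', v, v'} is not equal to 1. Let Ḡ be the bipartite complement of G, i.e., the bipartite graph on U ⊔ V whose edges are exactly the pairs {u, v} with u ∈ U, v ∈ V that are not edges of G. Then for every vertex x of positive degree in Ḡ, the connected component of x in Ḡ is a complete bipartite graph between its U-vertices and its V-vertices; that is, every u ∈ U and v ∈ V lying in the same connected component of Ḡ as x are adjacent in Ḡ. -/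
/-!
Three non-edges `uv`, `u'v`, `u'v'` of `G` with `u ≠ u'`, `v ≠ v'` force the fourth non-edge
`uv'`, since otherwise `{u, u', v, v'}` spans exactly one edge. So in `Ḡ` every path on four
vertices closes to a 4-cycle, and induction along a walk shows that vertices joined by a walk of
odd length are adjacent. In the bipartite graph `Ḡ` every walk from `U` to `V` has odd length.
-/

/-- The relation underlying the bipartite complement of the bipartite graph with
parts `U = Sum.inl`-vertices and `V = Sum.inr`-vertices and edge predicate `E`:
`u ∈ U` and `v ∈ V` are related exactly when `{u, v}` is a non-edge. -/
def bipCompRel {r : ℕ} (E : Fin r → Fin r → Bool) :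
    (Fin r ⊕ Fin r) → (Fin r ⊕ Fin r) → Prop
  | Sum.inl u, Sum.inr v => ¬ E u v
  | _, _ => False

namespace SimpleGraph

variable {V : Type*} {G : SimpleGraph V}

theorem Walk.adj_of_odd_length
    (hG : ∀ a b c d, G.Adj a b → G.Adj b c → G.Adj c d → G.Adj a d)
    {a d : V} (p : G.Walk a d) (hp : Odd p.length) : G.Adj a d := by
  suffices ∀ {a d : V} (p : G.Walk a d),
      (Odd p.length → G.Adj a d) ∧ (Even p.length → ∀ c, G.Adj c a → G.Adj c d) from
    (this p).1 hp
  intro a d p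
  induction p with
  | nil => exact ⟨fun h => absurd h (by simp), fun _ _ hc => hc⟩
  | cons hab q ih =>
    rw [Walk.length_cons, Nat.odd_add_one, Nat.even_add_one, Nat.not_even_iff_odd,
      Nat.not_odd_iff_even]
    exact ⟨fun hq => ih.2 hq _ hab, fun hq c hca => hG _ _ _ _ hca hab (ih.1 hq)⟩

theorem Coloring.adj_of_reachable_of_ne (c : G.Coloring Bool)
    (hG : ∀ a b c d, G.Adj a b → G.Adj b c → G.Adj c d → G.Adj a d)
    {a d : V} (hcol : c a ≠ c d) (h : G.Reachable a d) : G.Adj a d := by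
  obtain ⟨p⟩ := h
  refine p.adj_of_odd_length hG ((c.odd_length_iff_not_congr p).2 ?_)
  revert hcol
  cases c a <;> cases c d <;> simp

end SimpleGraph

open SimpleGraph

theorem apply_eq_false_of_three_apply_eq_false {α β : Type*} [DecidableEq α] [DecidableEq β]
    {E : α → β → Bool}
    (hE : ∀ u u' v v', u ≠ u' → v ≠ v' →
      ((({u, u'} : Finset α) ×ˢ ({v, v'} : Finset β)).filter (fun p => E p.1 p.2)).card ≠ 1)
    {u u' : α} {v v' : β} (h₁ : E u v = false) (h₂ : E u' v = false) (h₃ : E u' v' = false) :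
    E u v' = false := by
  rcases eq_or_ne u u' with rfl | huu
  · exact h₃
  rcases eq_or_ne v v' with rfl | hvv
  · exact h₁
  rw [Bool.eq_false_iff]
  intro h₄
  refine hE u u' v v' huu hvv ?_
  rw [Finset.card_eq_one]
  refine ⟨(u, v'), ?_⟩
  ext ⟨a, b⟩
  simp only [Finset.mem_filter, Finset.mem_product, Finset.mem_insert, Finset.mem_singleton,
    Prod.mk.injEq]
  constructor
  · rintro ⟨⟨rfl | rfl, rfl | rfl⟩, hab⟩ <;> simp_all
  · rintro ⟨rfl, rfl⟩
    simp_all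

section BipartiteComplement

variable {r : ℕ} (E : Fin r → Fin r → Bool)

def bipCompColoring : (fromRel (bipCompRel E)).Coloring Bool :=
  Coloring.mk Sum.isLeft <| by
    rintro (u | v) (u' | v') h <;> simp_all [bipCompRel]

variable {E}

theorem fromRel_bipCompRel_adj_of_adj_of_adj_of_adj
    (hE : ∀ u u' v v' : Fin r, u ≠ u' → v ≠ v' →
      ((({u, u'} : Finset (Fin r)) ×ˢ ({v, v'} : Finset (Fin r))).filter
        (fun p => E p.1 p.2)).card ≠ 1) :
    ∀ a b c d, (fromRel (bipCompRel E)).Adj a b → (fromRel (bipCompRel E)).Adj b c →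
      (fromRel (bipCompRel E)).Adj c d → (fromRel (bipCompRel E)).Adj a d := by
  rintro (u | v) (u' | v') (u'' | v'') (u''' | v''') hab hbc hcd <;>
    simp [bipCompRel] at hab hbc hcd ⊢
  · exact apply_eq_false_of_three_apply_eq_false hE hab hbc hcd
  · exact apply_eq_false_of_three_apply_eq_false hE hcd hbc hab

end BipartiteComplement

theorem stmt3_general {r : ℕ} (E : Fin r → Fin r → Bool)
    (hE : ∀ u u' v v' : Fin r, u ≠ u' → v ≠ v' →
      ((({u, u'} : Finset (Fin r)) ×ˢ ({v, v'} : Finset (Fin r))).filter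
        (fun p => E p.1 p.2)).card ≠ 1)
    (Gbar : SimpleGraph (Fin r ⊕ Fin r))
    (hG : Gbar = SimpleGraph.fromRel (bipCompRel E))
    (x : Fin r ⊕ Fin r) :
    ∀ u v : Fin r, Gbar.Reachable x (Sum.inl u) → Gbar.Reachable x (Sum.inr v) →
      Gbar.Adj (Sum.inl u) (Sum.inr v) := by
  subst hG
  intro u v hu hv
  exact (bipCompColoring E).adj_of_reachable_of_ne
    (fromRel_bipCompRel_adj_of_adj_of_adj_of_adj hE) nofun
    (hu.symm.trans hv)

/-- if in the bipartite graph `G` (with parts of size `r ≥ 2`) no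
quadruple `{u, u', v, v'}` with `u ≠ u'`, `v ≠ v'` induces exactly one edge,
then every connected component of the bipartite complement `Ḡ` containing a
vertex of positive degree is a complete bipartite graph: any `u ∈ U` and
`v ∈ V` in the same component of `Ḡ` as such a vertex are adjacent in `Ḡ`. -/
theorem stmt3 {r : ℕ} (hr : 2 ≤ r) (E : Fin r → Fin r → Bool)
    (hE : ∀ u u' v v' : Fin r, u ≠ u' → v ≠ v' →
      ((({u, u'} : Finset (Fin r)) ×ˢ ({v, v'} : Finset (Fin r))).filter
        (fun p => E p.1 p.2)).card ≠ 1)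
    (Gbar : SimpleGraph (Fin r ⊕ Fin r))
    (hG : Gbar = SimpleGraph.fromRel (bipCompRel E))
    (x : Fin r ⊕ Fin r) (hx : ∃ y, Gbar.Adj x y) :
    ∀ u v : Fin r, Gbar.Reachable x (Sum.inl u) → Gbar.Reachable x (Sum.inr v) →
      Gbar.Adj (Sum.inl u) (Sum.inr v) :=
  stmt3_general E hE Gbar hG x
end

section
/- Let r ≥ 2 and let P : [r]² → {0,1} be a binary predicate such that for all two-element subsets B, C ⊆ [r] the restriction P|_{B×C} is not a singleton. Then there exist an integer ℓ with 2 ≤ ℓ ≤ 2r and functions c₁, c₂ : [r] → [ℓ] such that for all i, j ∈ [r], P(i,j) = 1 if and only if c₁(i) ≠ c₂(j). -/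
/-!
The zeros of `P` form a difunctional relation: whenever `P i j = P i j' = P i' j = 0` also
`P i' j' = 0`, since otherwise `P` restricted to `{i, i'} × {j, j'}` would be a singleton.
A difunctional relation is a disjoint union of combinatorial rectangles `Aₖ × Bₖ`, so colouring
row `i` and column `j` by the rectangle containing them (and giving rows and columns outside
every rectangle fresh colours) gives `P i j = 0 ↔ c₁ i = c₂ j`. At most `2r` colours occur.
-/

/-- The restriction of `P` to `B × C` is a singleton: exactly one pair
`(b,c) ∈ B × C` satisfies `P b c = 1`. -/
def IsSingletonRestr {D : Type*} (P : D → D → Bool) (B C : Finset D) : Prop :=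
  ∃! p : D × D, p.1 ∈ B ∧ p.2 ∈ C ∧ P p.1 p.2 = true

/-- `R ∘ R⁻¹ ∘ R ⊆ R`. -/
def Difunctional {α β : Type*} (R : α → β → Prop) : Prop :=
  ∀ ⦃i i' : α⦄ ⦃j j' : β⦄, R i j → R i j' → R i' j → R i' j'

open Classical in
/-- Row `i` is coloured by its set of neighbours, column `j` by the neighbours of any row
adjacent to it; rows and columns without neighbours get colours of their own. -/
theorem Difunctional.exists_eq_iff {α β : Type*} {R : α → β → Prop} (hR : Difunctional R) :
    ∃ (f : α → Set β ⊕ α ⊕ β) (g : β → Set β ⊕ α ⊕ β), ∀ i j, R i j ↔ f i = g j := by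
  refine ⟨fun i => if ∃ j, R i j then .inl {j' | R i j'} else .inr (.inl i),
    fun j => if ∃ i, R i j then .inl {j' | ∃ i, R i j ∧ R i j'} else .inr (.inr j),
    fun i j => ⟨fun hij => ?_, fun h => ?_⟩⟩
  · simp only [show ∃ j, R i j from ⟨j, hij⟩, show ∃ i, R i j from ⟨i, hij⟩, if_true,
      Sum.inl.injEq]
    ext j'
    exact ⟨fun h => ⟨i, hij, h⟩, fun ⟨i', hi'j, hi'j'⟩ => hR hi'j hi'j' hij⟩
  · dsimp only at h
    split_ifs at h with hi hj
    · obtain ⟨i', hi'j⟩ := hj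
      have hj_mem : j ∈ {j' | ∃ i, R i j ∧ R i j'} := ⟨i', hi'j, hi'j⟩
      rwa [← Sum.inl.inj h] at hj_mem
    all_goals simp at h

theorem exists_fin_card_eq_iff_eq {ι γ : Type*} [Fintype ι] (h : ι → γ) :
    ∃ k : ι → Fin (Fintype.card ι), ∀ x y, k x = k y ↔ h x = h y := by
  classical
  refine ⟨fun x => Fin.castLE (Fintype.card_range_le h)
    (Fintype.equivFin _ (Set.rangeFactorization h x)), fun x y => ?_⟩
  simp [Fin.castLE_inj, Set.rangeFactorization]

theorem difunctional_eq_false_of_not_isSingletonRestr {D : Type*} [DecidableEq D]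
    {P : D → D → Bool}
    (hP : ∀ B C : Finset D, B.card = 2 → C.card = 2 → ¬ IsSingletonRestr P B C) :
    Difunctional fun i j => P i j = false := by
  intro i i' j j' hij hij' hi'j
  by_cases hi : i = i'
  · exact hi ▸ hij'
  by_cases hj : j = j'
  · exact hj ▸ hi'j
  by_contra hi'j'
  refine hP {i, i'} {j, j'} (Finset.card_pair hi) (Finset.card_pair hj)
    ⟨(i', j'), ⟨by simp, by simp, by simpa using hi'j'⟩, ?_⟩
  rintro ⟨a, b⟩ ⟨ha, hb, hab⟩
  simp only [Finset.mem_insert, Finset.mem_singleton] at ha hb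
  rcases ha with rfl | rfl <;> rcases hb with rfl | rfl <;> simp_all

/-- if no restriction of `P : [r]² → {0,1}` (with `r ≥ 2`) to a
product of two-element subdomains is a singleton, then there exist
`2 ≤ ℓ ≤ 2r` and colourings `c₁ c₂ : [r] → [ℓ]` with
`P(i,j) = 1 ↔ c₁(i) ≠ c₂(j)`. -/
theorem stmt4 {r : ℕ} (hr : 2 ≤ r) (P : Fin r → Fin r → Bool)
    (hP : ∀ B C : Finset (Fin r), B.card = 2 → C.card = 2 →
      ¬ IsSingletonRestr P B C) :
    ∃ ℓ : ℕ, 2 ≤ ℓ ∧ ℓ ≤ 2 * r ∧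
      ∃ c₁ c₂ : Fin r → Fin ℓ, ∀ i j : Fin r, P i j = true ↔ c₁ i ≠ c₂ j := by
  obtain ⟨f, g, hfg⟩ := (difunctional_eq_false_of_not_isSingletonRestr hP).exists_eq_iff
  obtain ⟨k, hk⟩ := exists_fin_card_eq_iff_eq (Sum.elim f g)
  have hcard : Fintype.card (Fin r ⊕ Fin r) = r + r := by
    rw [Fintype.card_sum, Fintype.card_fin]
  refine ⟨_, by omega, by omega, k ∘ Sum.inl, k ∘ Sum.inr, fun i j => ?_⟩
  rw [← Bool.not_eq_false, hfg, Ne, Function.comp_apply, Function.comp_apply, hk]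
  rfl
end

section
/- Let [m] = {0,...,m−1}, let P : [r]^k → {0,1} and P' : [r']^k → {0,1} be k-ary predicates, and let V be a finite set. Suppose there is a function f mapping each assignment A : V → [r] to an assignment f(A) : V^γ → [r'] such that for every weighted directed k-uniform hypergraph H on vertex set V and every assignment A : V → [r], Val_{H,P}(A) = Val_{γ(H),P'}(f(A)). Then for every weighted directed k-uniform hypergraph H on V and every 0 < ε < 1: if the k-partite k-fold cover γ(H) has an ε-P'-sparsifier with g hyperedges, then H has an ε-P-sparsifier with g hyperedges. -/
/-- The value of a `k`-ary CSP instance / weighted directed `k`-uniform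
hypergraph with predicate `P`, hyperedge set `E`, weights `w`, under
assignment `A`. -/
def hVal {W D : Type*} {k : ℕ} (P : (Fin k → D) → Bool) (E : Finset (Fin k → W))
    (w : (Fin k → W) → ℝ) (A : W → D) : ℝ :=
  ∑ e ∈ E, w e * (if P (fun i => A (e i)) then 1 else 0)

/-- Hyperedge set of the `k`-partite `k`-fold cover: the hyperedge
`(v₁, …, v_k)` is sent to `(v₁⁽⁰⁾, …, v_k⁽ᵏ⁻¹⁾)`, where `v⁽ⁱ⁾ = (v, i)`. -/
def coverEdges {W : Type*} [DecidableEq W] {k : ℕ} (E : Finset (Fin k → W)) :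
    Finset (Fin k → W × Fin k) :=
  E.image fun e => fun i => (e i, i)

/-- Weights of the `k`-partite `k`-fold cover:
`w^γ(v₁⁽⁰⁾, …, v_k⁽ᵏ⁻¹⁾) = w(v₁, …, v_k)`, and `0` on other tuples. -/
def coverWeight {W : Type*} {k : ℕ} (w : (Fin k → W) → ℝ) :
    (Fin k → W × Fin k) → ℝ :=
  fun f => if ∀ i, (f i).2 = i then w (fun i => (f i).1) else 0

section Cover

variable {W D : Type*} {k : ℕ}

def coverTuple (e : Fin k → W) : Fin k → W × Fin k := fun i => (e i, i)

theorem coverTuple_injective : Function.Injective (coverTuple : (Fin k → W) → _) :=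
  fun _ _ h => funext fun i => congrArg Prod.fst (congrFun h i)

theorem coverEdges_eq_image [DecidableEq W] (E : Finset (Fin k → W)) :
    coverEdges E = E.image coverTuple := rfl

theorem card_coverEdges [DecidableEq W] (E : Finset (Fin k → W)) :
    (coverEdges E).card = E.card :=
  Finset.card_image_of_injective E coverTuple_injective

theorem coverWeight_coverTuple (w : (Fin k → W) → ℝ) (e : Fin k → W) :
    coverWeight w (coverTuple e) = w e := by
  simp [coverWeight, coverTuple]

def pullbackEdges [DecidableEq W] (Eγ : Finset (Fin k → W × Fin k))
    (E : Finset (Fin k → W)) : Finset (Fin k → W) :=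
  E.filter fun e => coverTuple e ∈ Eγ

variable [DecidableEq W] {Eγ : Finset (Fin k → W × Fin k)} {E : Finset (Fin k → W)}

theorem coverEdges_pullbackEdges (h : Eγ ⊆ coverEdges E) :
    coverEdges (pullbackEdges Eγ E) = Eγ := by
  ext b
  simp only [coverEdges_eq_image, pullbackEdges, Finset.mem_image, Finset.mem_filter]
  constructor
  · rintro ⟨e, ⟨-, he⟩, rfl⟩
    exact he
  · intro hb
    obtain ⟨e, he, rfl⟩ := Finset.mem_image.mp (h hb)
    exact ⟨e, ⟨he, hb⟩, rfl⟩

theorem card_pullbackEdges (h : Eγ ⊆ coverEdges E) :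
    (pullbackEdges Eγ E).card = Eγ.card := by
  rw [← card_coverEdges, coverEdges_pullbackEdges h]

theorem hVal_cover_pullbackEdges (h : Eγ ⊆ coverEdges E) (P : (Fin k → D) → Bool)
    (wγ : (Fin k → W × Fin k) → ℝ) (B : W × Fin k → D) :
    hVal P (coverEdges (pullbackEdges Eγ E)) (coverWeight (wγ ∘ coverTuple)) B =
      hVal P Eγ wγ B := by
  rw [coverEdges_pullbackEdges h]
  refine Finset.sum_congr rfl fun b hb => ?_
  obtain ⟨e, -, rfl⟩ : ∃ e ∈ E, coverTuple e = b := Finset.mem_image.mp (h hb)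
  rw [coverWeight_coverTuple, Function.comp_apply]

end Cover

theorem stmt8_general {r r' k : ℕ}
    (P : (Fin k → Fin r) → Bool) (P' : (Fin k → Fin r') → Bool)
    (V : Type) [DecidableEq V]
    (f : (V → Fin r) → (V × Fin k → Fin r'))
    (hf : ∀ (E : Finset (Fin k → V)), (∀ e ∈ E, Function.Injective e) →
      ∀ w : (Fin k → V) → ℝ, (∀ e ∈ E, 0 < w e) →
      ∀ A : V → Fin r,
        hVal P E w A = hVal P' (coverEdges E) (coverWeight w) (f A))
    (E : Finset (Fin k → V)) (hE : ∀ e ∈ E, Function.Injective e)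
    (w : (Fin k → V) → ℝ) (hw : ∀ e ∈ E, 0 < w e)
    (ε : ℝ) (g : ℕ)
    (hsp : ∃ (Eγ : Finset (Fin k → V × Fin k)) (wγ : (Fin k → V × Fin k) → ℝ),
      Eγ ⊆ coverEdges E ∧ (∀ e ∈ Eγ, 0 < wγ e) ∧ Eγ.card = g ∧
      ∀ B : V × Fin k → Fin r',
        (1 - ε) * hVal P' (coverEdges E) (coverWeight w) B ≤ hVal P' Eγ wγ B ∧
        hVal P' Eγ wγ B ≤ (1 + ε) * hVal P' (coverEdges E) (coverWeight w) B) :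
    ∃ (Eε : Finset (Fin k → V)) (wε : (Fin k → V) → ℝ),
      Eε ⊆ E ∧ (∀ e ∈ Eε, 0 < wε e) ∧ Eε.card = g ∧
      ∀ A : V → Fin r,
        (1 - ε) * hVal P E w A ≤ hVal P Eε wε A ∧
        hVal P Eε wε A ≤ (1 + ε) * hVal P E w A := by
  obtain ⟨Eγ, wγ, hsub, hpos, hcard, hval⟩ := hsp
  have hsubE : pullbackEdges Eγ E ⊆ E := Finset.filter_subset _ _
  have hposε : ∀ e ∈ pullbackEdges Eγ E, 0 < (wγ ∘ coverTuple) e :=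
    fun e he => hpos _ (Finset.mem_filter.mp he).2
  refine ⟨pullbackEdges Eγ E, wγ ∘ coverTuple, hsubE, hposε,
    (card_pullbackEdges hsub).trans hcard, fun A => ?_⟩
  rw [hf _ (fun e he => hE e (hsubE he)) _ hposε A, hVal_cover_pullbackEdges hsub,
    hf E hE w hw A]
  exact hval (f A)

/-- if values of `(H, P)` always equal values of `(γ(H), P')` via
`f`, then an ε-P'-sparsifier of the `k`-partite `k`-fold cover `γ(H)` with `g`
hyperedges yields an ε-P-sparsifier of `H` with `g` hyperedges. -/
theorem stmt8 {r r' k : ℕ}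
    (P : (Fin k → Fin r) → Bool) (P' : (Fin k → Fin r') → Bool)
    (V : Type) [Fintype V] [DecidableEq V]
    (f : (V → Fin r) → (V × Fin k → Fin r'))
    (hf : ∀ (E : Finset (Fin k → V)), (∀ e ∈ E, Function.Injective e) →
      ∀ w : (Fin k → V) → ℝ, (∀ e ∈ E, 0 < w e) →
      ∀ A : V → Fin r,
        hVal P E w A = hVal P' (coverEdges E) (coverWeight w) (f A))
    (E : Finset (Fin k → V)) (hE : ∀ e ∈ E, Function.Injective e)
    (w : (Fin k → V) → ℝ) (hw : ∀ e ∈ E, 0 < w e)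
    (ε : ℝ) (hε0 : 0 < ε) (hε1 : ε < 1) (g : ℕ)
    (hsp : ∃ (Eγ : Finset (Fin k → V × Fin k)) (wγ : (Fin k → V × Fin k) → ℝ),
      Eγ ⊆ coverEdges E ∧ (∀ e ∈ Eγ, 0 < wγ e) ∧ Eγ.card = g ∧
      ∀ B : V × Fin k → Fin r',
        (1 - ε) * hVal P' (coverEdges E) (coverWeight w) B ≤ hVal P' Eγ wγ B ∧
        hVal P' Eγ wγ B ≤ (1 + ε) * hVal P' (coverEdges E) (coverWeight w) B) :
    ∃ (Eε : Finset (Fin k → V)) (wε : (Fin k → V) → ℝ),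
      Eε ⊆ E ∧ (∀ e ∈ Eε, 0 < wε e) ∧ Eε.card = g ∧
      ∀ A : V → Fin r,
        (1 - ε) * hVal P E w A ≤ hVal P Eε wε A ∧
        hVal P Eε wε A ≤ (1 + ε) * hVal P E w A :=
  stmt8_general P P' V f hf E hE w hw ε g hsp
end

section
/- Let P : D^k → {0,1} be a k-ary predicate on a finite domain D that contains a singleton ℓ-cube for some 2 ≤ ℓ ≤ k. For every integer q ≥ 1, let H be a weighted directed k-uniform hypergraph on n = kq vertices V = V₁ ⊔ ... ⊔ V_k with |V_i| = q for each i, whose hyperedge set is E = {(u₁,...,u_k) : u_i ∈ V_i for all i} (so |E| = q^k), with arbitrary positive weights. Then for every 0 < ε < 1, every ε-P-sparsifier H_ε = (V, E_ε, w_ε) of H satisfies |E_ε| ≥ q^ℓ. -/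
/-- The tuple whose `m`-th coordinate is `d ⟨m⟩ (i ⟨m⟩)` for `m < ℓ`,
and `y m` for `m ≥ ℓ`. -/
def cubeTuple {D : Type*} (k ℓ : ℕ) (d : Fin ℓ → Fin 2 → D) (i : Fin ℓ → Fin 2)
    (y : Fin k → D) : Fin k → D :=
  fun m => if h : (m : ℕ) < ℓ then d ⟨m, h⟩ (i ⟨m, h⟩) else y m

/-- `P` contains a singleton `ℓ`-cube: there are two-element subdomains
`D_j = {d j 0, d j 1}`, indices `n : Fin ℓ → Fin 2`, and a permutation `σ` of
the `k` coordinate positions such that some completion `x` of the cube vertex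
given by `n` lies in the support of `P`, and every tuple of the permuted cube
form lying in the support of `P` must use the indices `n` on the cube
coordinates. -/
def containsSingletonCube {D : Type*} (k ℓ : ℕ) (P : (Fin k → D) → Bool) : Prop :=
  ∃ (d : Fin ℓ → Fin 2 → D) (n : Fin ℓ → Fin 2) (σ : Equiv.Perm (Fin k)),
    (∀ j, d j 0 ≠ d j 1) ∧
    (∃ x : Fin k → D, P (fun m => cubeTuple k ℓ d n x (σ m)) = true) ∧
    (∀ (y : Fin k → D) (i : Fin ℓ → Fin 2),
      P (fun m => cubeTuple k ℓ d i y (σ m)) = true → i = n)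

/-!
For each choice `u : Fin ℓ → Fin q` of one vertex in each of the `ℓ` cube parts, give those
vertices the coordinates of the cube vertex `n`, every other vertex of a cube part the opposite
value of `D_j`, and the remaining parts a completion `x` with `P (n, x) = 1`. The hyperedge through the chosen
vertices is satisfied, so a sparsifier must keep a satisfied hyperedge too; but since the cube is
a singleton, any satisfied hyperedge passes through exactly the chosen vertices and so recovers
`u`. Thus the sparsifier contains `q ^ ℓ` distinct hyperedges.
-/

section Value

variable {W D : Type*} {k : ℕ} {P : (Fin k → D) → Bool} {E : Finset (Fin k → W)}
  {w : (Fin k → W) → ℝ} {A : W → D}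

lemma hVal_pos_of_sat (hw : ∀ e ∈ E, 0 < w e) {e : Fin k → W} (he : e ∈ E)
    (hP : P (fun i => A (e i)) = true) : 0 < hVal P E w A := by
  have hterm_nonneg : ∀ e ∈ E, 0 ≤ w e * (if P (fun i => A (e i)) then 1 else 0) :=
    fun e he => mul_nonneg (hw e he).le (by split <;> norm_num)
  calc 0 < w e := hw e he
    _ = w e * (if P (fun i => A (e i)) then 1 else 0) := by rw [if_pos hP, mul_one]
    _ ≤ hVal P E w A := Finset.single_le_sum hterm_nonneg he

lemma exists_sat_of_hVal_ne_zero (h : hVal P E w A ≠ 0) :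
    ∃ e ∈ E, P (fun i => A (e i)) = true := by
  obtain ⟨e, he, hterm⟩ := Finset.exists_ne_zero_of_sum_ne_zero h
  refine ⟨e, he, ?_⟩
  by_contra hP
  simp [hP] at hterm

lemma exists_sat_of_le_hVal {ε : ℝ} (hε1 : ε < 1) {E' : Finset (Fin k → W)}
    {w' : (Fin k → W) → ℝ} (hle : (1 - ε) * hVal P E w A ≤ hVal P E' w' A)
    (hpos : 0 < hVal P E w A) : ∃ e ∈ E', P (fun i => A (e i)) = true :=
  exists_sat_of_hVal_ne_zero (by nlinarith)

end Value

lemma Fin.two_ite_add_one_eq_self {c : Prop} [Decidable c] {t : Fin 2} :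
    (if c then t else t + 1) = t ↔ c := by
  by_cases hc : c <;> simp [hc]

section Cube

variable {D : Type*} {k ℓ q : ℕ} (hℓk : ℓ ≤ k) (d : Fin ℓ → Fin 2 → D) (n : Fin ℓ → Fin 2)
  (x : Fin k → D) (σ : Equiv.Perm (Fin k))

/-- Part `m` of the `k`-partite hypergraph plays the role of coordinate `σ m` of the cube. -/
def cubeAssignment (u : Fin ℓ → Fin q) (p : Fin k × Fin q) : D :=
  cubeTuple k ℓ d (fun j => if p.2 = u j then n j else n j + 1) x (σ p.1)

lemma cubeAssignment_partite (u : Fin ℓ → Fin q) (f : Fin k → Fin q) :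
    (fun m => cubeAssignment d n x σ u (m, f m)) = fun m =>
      cubeTuple k ℓ d (fun j => if f (σ.symm (Fin.castLE hℓk j)) = u j then n j else n j + 1)
        x (σ m) := by
  funext m
  unfold cubeAssignment cubeTuple
  split_ifs with h
  · have hm : σ.symm (Fin.castLE hℓk ⟨σ m, h⟩) = m := σ.symm_apply_eq.mpr rfl
    simp only [hm]
  · rfl

variable {x} {P : (Fin k → D) → Bool}

lemma cubeAssignment_sat_iff (hsing : ∀ (y : Fin k → D) (i : Fin ℓ → Fin 2),
      P (fun m => cubeTuple k ℓ d i y (σ m)) = true → i = n)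
    (hx : P (fun m => cubeTuple k ℓ d n x (σ m)) = true) (u : Fin ℓ → Fin q)
    (f : Fin k → Fin q) :
    P (fun m => cubeAssignment d n x σ u (m, f m)) = true ↔
      ∀ j, f (σ.symm (Fin.castLE hℓk j)) = u j := by
  rw [cubeAssignment_partite hℓk]
  constructor
  · intro hP j
    exact Fin.two_ite_add_one_eq_self.mp (congrFun (hsing x _ hP) j)
  · intro hf
    simpa only [hf, if_true] using hx

end Cube

theorem stmt9_general {D : Type} {k ℓ : ℕ}
    (hℓk : ℓ ≤ k)
    (P : (Fin k → D) → Bool) (hcube : containsSingletonCube k ℓ P)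
    (q : ℕ) (hq : 1 ≤ q)
    (E : Finset (Fin k → Fin k × Fin q))
    (hEdef : E = Finset.univ.image
      (fun u : Fin k → Fin q => fun i : Fin k => (i, u i)))
    (w : (Fin k → Fin k × Fin q) → ℝ) (hw : ∀ e ∈ E, 0 < w e)
    (ε : ℝ) (hε1 : ε < 1)
    (Eε : Finset (Fin k → Fin k × Fin q)) (wε : (Fin k → Fin k × Fin q) → ℝ)
    (hsub : Eε ⊆ E)
    (hsp : ∀ A : Fin k × Fin q → D,
      (1 - ε) * hVal P E w A ≤ hVal P Eε wε A ∧
      hVal P Eε wε A ≤ (1 + ε) * hVal P E w A) :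
    q ^ ℓ ≤ Eε.card := by
  obtain ⟨d, n, σ, -, ⟨x, hx⟩, hsing⟩ := hcube
  set A := cubeAssignment (q := q) d n x σ
  have hsat_iff := cubeAssignment_sat_iff (q := q) hℓk d n σ hsing hx
  have hmem_E : ∀ f : Fin k → Fin q, (fun i => (i, f i)) ∈ E := fun f => by
    rw [hEdef]; exact Finset.mem_image_of_mem _ (Finset.mem_univ f)
  have hkept : ∀ u, ∃ e ∈ Eε, P (fun m => A u (e m)) = true := by
    intro u
    let f := Function.extend (Fin.castLE hℓk) u (fun _ => ⟨0, hq⟩) ∘ σ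
    have hf : P (fun m => A u (m, f m)) = true := (hsat_iff u f).mpr fun j => by
      simp [f, (Fin.castLE_injective hℓk).extend_apply]
    exact exists_sat_of_le_hVal hε1 (hsp (A u)).1 (hVal_pos_of_sat hw (hmem_E f) hf)
  choose F hF_mem hF_sat using hkept
  have hread : ∀ u, ∀ e ∈ E, P (fun m => A u (e m)) = true →
      u = fun j => (e (σ.symm (Fin.castLE hℓk j))).2 := by
    intro u e he hP
    rw [hEdef] at he
    obtain ⟨f, -, rfl⟩ := Finset.mem_image.mp he
    exact funext fun j => ((hsat_iff u f).mp hP j).symm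
  have hF_inj : Function.Injective F := fun u u' h => by
    rw [hread u _ (hsub (hF_mem u)) (hF_sat u), hread u' _ (hsub (hF_mem u')) (hF_sat u'), h]
  calc q ^ ℓ = Fintype.card (Fin ℓ → Fin q) := by simp
    _ ≤ Eε.card := Finset.card_le_card_of_injOn F (fun u _ => hF_mem u) hF_inj.injOn

/-- if `P` contains a singleton `ℓ`-cube (`2 ≤ ℓ ≤ k`), then for
the complete `k`-partite `k`-uniform hypergraph on `kq` vertices (parts
`V_i = {i} × Fin q`, hyperedges all `(u₁, …, u_k)` with `u_i ∈ V_i`, arbitrary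
positive weights), every ε-P-sparsifier has at least `q^ℓ` hyperedges. -/
theorem stmt9 {D : Type} [Fintype D] [DecidableEq D] {k ℓ : ℕ}
    (hℓ2 : 2 ≤ ℓ) (hℓk : ℓ ≤ k)
    (P : (Fin k → D) → Bool) (hcube : containsSingletonCube k ℓ P)
    (q : ℕ) (hq : 1 ≤ q)
    (E : Finset (Fin k → Fin k × Fin q))
    (hEdef : E = Finset.univ.image
      (fun u : Fin k → Fin q => fun i : Fin k => (i, u i)))
    (w : (Fin k → Fin k × Fin q) → ℝ) (hw : ∀ e ∈ E, 0 < w e)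
    (ε : ℝ) (hε0 : 0 < ε) (hε1 : ε < 1)
    (Eε : Finset (Fin k → Fin k × Fin q)) (wε : (Fin k → Fin k × Fin q) → ℝ)
    (hsub : Eε ⊆ E) (hwε : ∀ e ∈ Eε, 0 < wε e)
    (hsp : ∀ A : Fin k × Fin q → D,
      (1 - ε) * hVal P E w A ≤ hVal P Eε wε A ∧
      hVal P Eε wε A ≤ (1 + ε) * hVal P E w A) :
    q ^ ℓ ≤ Eε.card :=
  stmt9_general hℓk P hcube q hq E hEdef w hw ε hε1 Eε wε hsub hsp
end

section
/- Let P : D^k → {0,1} be a k-ary predicate on a finite domain D with nonempty support, and suppose there exists a label z ∈ D such that P(σ(x₁,...,x_{k−1},z)) = 0 for all x₁,...,x_{k−1} ∈ D and all permutations σ of the k coordinate positions (i.e., z appears in no tuple of the support of P). Then for every weighted directed k-uniform hypergraph H = (V, E, w), every 0 < ε < 1, and every ε-P-sparsifier H_ε = (V, E_ε, w_ε) of H, we have |E_ε| ≥ |E| / k!. -/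
/-!
Take a satisfying tuple `t` of `P`. For a hyperedge `e ∈ E`, the assignment that writes `t`
along `e` and the forbidden label `z` everywhere else satisfies `e`, so `Val_H > 0`, hence
`Val_{H_ε} ≥ (1 - ε) Val_H > 0` and some `e' ∈ E_ε` is satisfied. Since `z` never occurs in a
satisfied tuple, every vertex of `e'` is a vertex of `e`; both being injective `k`-tuples, `e'` is
a reordering of `e`. Thus `E` lies in the set of reorderings of `E_ε`, which has at most
`k! · |E_ε|` elements.
-/

open Finset Function

section hVal

variable {W D : Type*} {k : ℕ} {P : (Fin k → D) → Bool} {E : Finset (Fin k → W)}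
  {w : (Fin k → W) → ℝ} {A : W → D}

theorem hVal_pos_of_mem {e : Fin k → W} (hw : ∀ f ∈ E, 0 ≤ w f) (he : e ∈ E) (hwe : 0 < w e)
    (hP : P (A ∘ e) = true) : 0 < hVal P E w A :=
  calc 0 < w e * (if P (A ∘ e) then 1 else 0) := by simpa [hP] using hwe
    _ ≤ hVal P E w A :=
      single_le_sum (f := fun f => w f * (if P (A ∘ f) then 1 else 0))
        (fun f hf => mul_nonneg (hw f hf) (by positivity)) he

theorem exists_mem_of_hVal_pos (h : 0 < hVal P E w A) : ∃ e ∈ E, P (A ∘ e) = true := by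
  by_contra! hP
  refine h.ne' (sum_eq_zero fun e he => ?_)
  show w e * (if P (A ∘ e) then 1 else 0) = 0
  simp [hP e he]

end hVal

theorem exists_perm_comp_eq_of_range_subset {α β : Type*} [Finite α] {e e' : α → β}
    (he' : Injective e') (h : Set.range e' ⊆ Set.range e) : ∃ σ : Equiv.Perm α, e ∘ σ = e' := by
  choose σ hσ using fun i => h ⟨i, rfl⟩
  have hσinj : Injective σ := fun i j hij => he' (by rw [← hσ i, ← hσ j, hij])
  exact ⟨Equiv.ofBijective σ hσinj.bijective_of_finite, funext hσ⟩

theorem card_le_card_mul_factorial_of_forall_comp_perm_mem {ι V : Type*} [Fintype ι]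
    {E F : Finset (ι → V)} (h : ∀ e ∈ E, ∃ σ : Equiv.Perm ι, e ∘ σ ∈ F) :
    #E ≤ #F * (Fintype.card ι).factorial := by
  classical
  have hE : E ⊆ (F ×ˢ univ).image fun p : (ι → V) × Equiv.Perm ι => p.1 ∘ p.2 := by
    intro e he
    obtain ⟨σ, hσ⟩ := h e he
    exact mem_image.2 ⟨(e ∘ σ, σ.symm), by simp [hσ], by ext; simp⟩
  calc #E ≤ #(F ×ˢ (univ : Finset (Equiv.Perm ι))) := (card_le_card hE).trans card_image_le
    _ = #F * (Fintype.card ι).factorial := by rw [card_product, card_univ, Fintype.card_perm]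

theorem exists_comp_perm_mem_of_hVal_pos {D V : Type*} {k : ℕ} {P : (Fin k → D) → Bool}
    {t : Fin k → D} (ht : P t = true) {z : D} (hz : ∀ t : Fin k → D, P t = true → ∀ i, t i ≠ z)
    {E F : Finset (Fin k → V)} (hE : ∀ e ∈ E, Injective e) (hF : ∀ e ∈ F, Injective e)
    {w wF : (Fin k → V) → ℝ} (hw : ∀ e ∈ E, 0 < w e)
    (hpos : ∀ A : V → D, 0 < hVal P E w A → 0 < hVal P F wF A) :
    ∀ e ∈ E, ∃ σ : Equiv.Perm (Fin k), e ∘ σ ∈ F := by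
  intro e he
  set A : V → D := extend e t fun _ => z
  have hAe : A ∘ e = t := funext ((hE e he).extend_apply t fun _ => z)
  have hval : 0 < hVal P E w A :=
    hVal_pos_of_mem (fun f hf => (hw f hf).le) he (hw e he) (hAe ▸ ht)
  obtain ⟨e', he', hPe'⟩ := exists_mem_of_hVal_pos (hpos A hval)
  have hrange : Set.range e' ⊆ Set.range e := by
    rintro _ ⟨i, rfl⟩
    by_contra hi
    exact hz _ hPe' i (extend_apply' t (fun _ => z) _ hi)
  obtain ⟨σ, hσ⟩ := exists_perm_comp_eq_of_range_subset (hF e' he') hrange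
  exact ⟨σ, hσ ▸ he'⟩

theorem stmt10_general {D : Type} {k : ℕ}
    (P : (Fin k → D) → Bool) (hne : ∃ t, P t = true)
    (z : D) (hz : ∀ t : Fin k → D, P t = true → ∀ i, t i ≠ z)
    (V : Type)
    (E : Finset (Fin k → V)) (hE : ∀ e ∈ E, Function.Injective e)
    (w : (Fin k → V) → ℝ) (hw : ∀ e ∈ E, 0 < w e)
    (ε : ℝ) (hε1 : ε < 1)
    (Eε : Finset (Fin k → V)) (wε : (Fin k → V) → ℝ)
    (hsub : Eε ⊆ E)
    (hsp : ∀ A : V → D,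
      (1 - ε) * hVal P E w A ≤ hVal P Eε wε A ∧
      hVal P Eε wε A ≤ (1 + ε) * hVal P E w A) :
    (E.card : ℝ) / (Nat.factorial k : ℝ) ≤ (Eε.card : ℝ) := by
  obtain ⟨t, ht⟩ := hne
  have hpos : ∀ A, 0 < hVal P E w A → 0 < hVal P Eε wε A := fun A hA =>
    (mul_pos (sub_pos.2 hε1) hA).trans_le (hsp A).1
  have hcard := card_le_card_mul_factorial_of_forall_comp_perm_mem
    (exists_comp_perm_mem_of_hVal_pos ht hz hE (fun e he => hE e (hsub he)) hw hpos)
  rw [Fintype.card_fin] at hcard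
  rw [div_le_iff₀ (by positivity)]
  exact_mod_cast hcard

/-- if `P : D^k → {0,1}` has nonempty support and some label
`z ∈ D` appears in no tuple of the support of `P`, then every ε-P-sparsifier
`H_ε` of any weighted directed `k`-uniform hypergraph `H = (V, E, w)` satisfies
`|E_ε| ≥ |E| / k!`. -/
theorem stmt10 {D : Type} [Fintype D] [DecidableEq D] {k : ℕ}
    (P : (Fin k → D) → Bool) (hne : ∃ t, P t = true)
    (z : D) (hz : ∀ t : Fin k → D, P t = true → ∀ i, t i ≠ z)
    (V : Type) [Fintype V] [DecidableEq V]
    (E : Finset (Fin k → V)) (hE : ∀ e ∈ E, Function.Injective e)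
    (w : (Fin k → V) → ℝ) (hw : ∀ e ∈ E, 0 < w e)
    (ε : ℝ) (hε0 : 0 < ε) (hε1 : ε < 1)
    (Eε : Finset (Fin k → V)) (wε : (Fin k → V) → ℝ)
    (hsub : Eε ⊆ E) (hwε : ∀ e ∈ Eε, 0 < wε e)
    (hsp : ∀ A : V → D,
      (1 - ε) * hVal P E w A ≤ hVal P Eε wε A ∧
      hVal P Eε wε A ≤ (1 + ε) * hVal P E w A) :
    (E.card : ℝ) / (Nat.factorial k : ℝ) ≤ (Eε.card : ℝ) :=
  stmt10_general P hne z hz V E hE w hw ε hε1 Eε wε hsub hsp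
end

section
/- Let D be a finite domain with |D| ≥ 2, let a ∈ D, and let P : D^k → {0,1} be the k-ary predicate with support exactly {(a, a, ..., a)}. Then for every weighted directed k-uniform hypergraph H = (V, E, w), every 0 < ε < 1, and every ε-P-sparsifier H_ε = (V, E_ε, w_ε) of H, we have |E_ε| ≥ |E| / k!. -/
open Finset Function
open scoped Nat

section

variable {D V : Type*} {k : ℕ}

theorem single_le_hVal {P : (Fin k → D) → Bool} {E : Finset (Fin k → V)} {w : (Fin k → V) → ℝ}
    {A : V → D} {e : Fin k → V} (hw : ∀ g ∈ E, 0 ≤ w g) (he : e ∈ E)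
    (hPe : P (fun i => A (e i)) = true) : w e ≤ hVal P E w A := by
  have := single_le_sum (f := fun g => w g * if P (fun i => A (g i)) then (1 : ℝ) else 0)
    (fun g hg => mul_nonneg (hw g hg) (by split <;> norm_num)) he
  simpa [hVal, hPe] using this

theorem exists_mem_of_hVal_ne_zero {P : (Fin k → D) → Bool} {E : Finset (Fin k → V)}
    {w : (Fin k → V) → ℝ} {A : V → D} (h : hVal P E w A ≠ 0) :
    ∃ e ∈ E, P (fun i => A (e i)) = true := by
  obtain ⟨e, he, hne⟩ := exists_ne_zero_of_sum_ne_zero h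
  refine ⟨e, he, ?_⟩
  by_contra hPe
  simp [hPe] at hne

theorem pred_ite_mem_eq_true_iff [DecidableEq V] {a b : D} (hb : b ≠ a) {P : (Fin k → D) → Bool}
    (hP : ∀ t : Fin k → D, P t = true ↔ t = fun _ => a) (s : Finset V)
    (g : Fin k → V) : P (fun i => if g i ∈ s then a else b) = true ↔ ∀ i, g i ∈ s := by
  rw [hP, funext_iff]
  refine forall_congr' fun i => ?_
  split_ifs with h <;> simp [h, hb]

theorem card_filter_image_eq_le_factorial [DecidableEq V] {E : Finset (Fin k → V)}
    (hE : ∀ e ∈ E, Injective e) (s : Finset V) :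
    #(E.filter fun e => univ.image e = s) ≤ k ! := by
  rcases (E.filter fun e => univ.image e = s).eq_empty_or_nonempty with h | ⟨e₀, he₀⟩
  · simp [h]
  rw [mem_filter] at he₀
  have hs : #s = k := by
    rw [← he₀.2, card_image_of_injective _ (hE _ he₀.1), card_univ, Fintype.card_fin]
  calc #(E.filter fun e => univ.image e = s)
      ≤ #(univ.image (fun (σ : Fin k ↪ s) (i : Fin k) => (σ i : V))) := card_le_card ?_
    _ ≤ Fintype.card (Fin k ↪ s) := card_image_le.trans_eq card_univ
    _ = k ! := by
      rw [Fintype.card_embedding_eq, Fintype.card_coe, hs, Fintype.card_fin,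
        Nat.descFactorial_self]
  intro e he
  rw [mem_filter] at he
  have hmem : ∀ i, e i ∈ s := fun i => he.2 ▸ mem_image_of_mem e (mem_univ i)
  exact mem_image.2
    ⟨⟨fun i => ⟨e i, hmem i⟩, fun i j h => hE e he.1 (congrArg Subtype.val h)⟩, mem_univ _, rfl⟩

theorem exists_mem_image_eq_of_le_hVal [DecidableEq V] {a b : D} (hb : b ≠ a)
    {P : (Fin k → D) → Bool} (hP : ∀ t : Fin k → D, P t = true ↔ t = fun _ => a)
    {E Eε : Finset (Fin k → V)} (hE : ∀ e ∈ E, Injective e) (hsub : Eε ⊆ E)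
    {w wε : (Fin k → V) → ℝ} (hw : ∀ e ∈ E, 0 < w e) {ε : ℝ} (hε1 : ε < 1)
    (hlow : ∀ A : V → D, (1 - ε) * hVal P E w A ≤ hVal P Eε wε A)
    {e : Fin k → V} (he : e ∈ E) : ∃ e' ∈ Eε, univ.image e' = univ.image e := by
  set A : V → D := fun v => if v ∈ univ.image e then a else b
  have hAP := pred_ite_mem_eq_true_iff hb hP (univ.image e)
  have hPe : P (fun i => A (e i)) = true := (hAP e).2 fun i => mem_image_of_mem e (mem_univ i)
  have hpos : 0 < hVal P Eε wε A :=
    (mul_pos (sub_pos.2 hε1) ((hw e he).trans_le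
      (single_le_hVal (fun g hg => (hw g hg).le) he hPe))).trans_le (hlow A)
  obtain ⟨e', he', hPe'⟩ := exists_mem_of_hVal_ne_zero hpos.ne'
  refine ⟨e', he', eq_of_subset_of_card_le (image_subset_iff.2 fun i _ => (hAP e').1 hPe' i) ?_⟩
  rw [card_image_of_injective _ (hE e he), card_image_of_injective _ (hE e' (hsub he'))]

end

theorem stmt11_general {D : Type} [Fintype D] (hD : 2 ≤ Fintype.card D)
    {k : ℕ} (a : D)
    (P : (Fin k → D) → Bool) (hP : ∀ t : Fin k → D, P t = true ↔ t = fun _ => a)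
    (V : Type)
    (E : Finset (Fin k → V)) (hE : ∀ e ∈ E, Function.Injective e)
    (w : (Fin k → V) → ℝ) (hw : ∀ e ∈ E, 0 < w e)
    (ε : ℝ) (hε1 : ε < 1)
    (Eε : Finset (Fin k → V)) (wε : (Fin k → V) → ℝ)
    (hsub : Eε ⊆ E)
    (hsp : ∀ A : V → D,
      (1 - ε) * hVal P E w A ≤ hVal P Eε wε A ∧
      hVal P Eε wε A ≤ (1 + ε) * hVal P E w A) :
    (E.card : ℝ) / (Nat.factorial k : ℝ) ≤ (Eε.card : ℝ) := by
  classical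
  obtain ⟨b, hb⟩ := Fintype.exists_ne_of_one_lt_card hD a
  have himage : E.image (fun e => univ.image e) ⊆ Eε.image (fun e => univ.image e) := by
    intro s hs
    obtain ⟨e, he, rfl⟩ := mem_image.1 hs
    obtain ⟨e', he', h⟩ :=
      exists_mem_image_eq_of_le_hVal hb hP hE hsub hw hε1 (fun A => (hsp A).1) he
    exact mem_image.2 ⟨e', he', h⟩
  have hcard : #E ≤ k ! * #Eε :=
    calc #E ≤ k ! * #(E.image fun e => univ.image e) :=
          card_le_mul_card_image E _ fun s _ => card_filter_image_eq_le_factorial hE s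
      _ ≤ k ! * #(Eε.image fun e => univ.image e) := Nat.mul_le_mul_left _ (card_le_card himage)
      _ ≤ k ! * #Eε := Nat.mul_le_mul_left _ card_image_le
  rw [div_le_iff₀ (by positivity)]
  exact_mod_cast hcard.trans_eq (mul_comm _ _)

/-- if `|D| ≥ 2` and `P : D^k → {0,1}` is the singleton predicate
whose support is exactly `{(a, a, …, a)}`, then every ε-P-sparsifier `H_ε` of
any weighted directed `k`-uniform hypergraph `H = (V, E, w)` satisfies
`|E_ε| ≥ |E| / k!`. -/
theorem stmt11 {D : Type} [Fintype D] [DecidableEq D] (hD : 2 ≤ Fintype.card D)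
    {k : ℕ} (a : D)
    (P : (Fin k → D) → Bool) (hP : ∀ t : Fin k → D, P t = true ↔ t = fun _ => a)
    (V : Type) [Fintype V] [DecidableEq V]
    (E : Finset (Fin k → V)) (hE : ∀ e ∈ E, Function.Injective e)
    (w : (Fin k → V) → ℝ) (hw : ∀ e ∈ E, 0 < w e)
    (ε : ℝ) (hε0 : 0 < ε) (hε1 : ε < 1)
    (Eε : Finset (Fin k → V)) (wε : (Fin k → V) → ℝ)
    (hsub : Eε ⊆ E) (hwε : ∀ e ∈ Eε, 0 < wε e)
    (hsp : ∀ A : V → D,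
      (1 - ε) * hVal P E w A ≤ hVal P Eε wε A ∧
      hVal P Eε wε A ≤ (1 + ε) * hVal P E w A) :
    (E.card : ℝ) / (Nat.factorial k : ℝ) ≤ (Eε.card : ℝ) :=
  stmt11_general hD a P hP V E hE w hw ε hε1 Eε wε hsub hsp
end

section
/- Let [r] = {0,...,r−1} with r ≥ 2, let P : [r]^k → {0,1} be a singleton predicate with support {(a₁,...,a_k)}, and let nOr : [r]^k → {0,1} be the predicate with support {(0,...,0)}. For an assignment A : V → [r], define the assignment A^γ on the vertex set V^γ of the k-partite k-fold cover by A^γ(v^(i)) = A(v) + a_{i+1} (mod r) for i = 0,...,k−1. Then for every weighted directed k-uniform hypergraph H on V, Val_{H,nOr}(A) = Val_{γ(H),P}(A^γ). -/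
theorem Fin.add_eq_right_iff_val_eq_zero {n : ℕ} (x y : Fin n) : x + y = y ↔ (x : ℕ) = 0 := by
  have : NeZero n := NeZero.of_pos y.pos
  rw [add_eq_right, Fin.val_eq_zero_iff]

theorem singleton_pred_add_eq_nOr {r k : ℕ} (P nOr : (Fin k → Fin r) → Bool) (a : Fin k → Fin r)
    (hP : ∀ t, P t = true ↔ t = a) (hnOr : ∀ t, nOr t = true ↔ ∀ i, (t i : ℕ) = 0)
    (t : Fin k → Fin r) : P (t + a) = nOr t := by
  rw [Bool.eq_iff_iff, hP, hnOr, funext_iff]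
  exact forall_congr' fun i => Fin.add_eq_right_iff_val_eq_zero (t i) (a i)

theorem hVal_coverEdges_coverWeight {W D : Type*} [DecidableEq W] {k : ℕ}
    (Q : (Fin k → D) → Bool) (E : Finset (Fin k → W)) (w : (Fin k → W) → ℝ) (B : W × Fin k → D) :
    hVal Q (coverEdges E) (coverWeight w) B =
      ∑ e ∈ E, w e * (if Q (fun i => B (e i, i)) then 1 else 0) := by
  have hinj : Set.InjOn (fun (e : Fin k → W) i => (e i, i)) E :=
    fun e _ e' _ h => funext fun i => (Prod.ext_iff.mp (congrFun h i)).1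
  rw [hVal, coverEdges, Finset.sum_image hinj]
  refine Finset.sum_congr rfl fun e _ => ?_
  rw [coverWeight, if_pos fun _ => rfl]

theorem stmt13_general {r k : ℕ} (P nOr : (Fin k → Fin r) → Bool) (a : Fin k → Fin r)
    (hP : ∀ t : Fin k → Fin r, P t = true ↔ t = a)
    (hnOr : ∀ t : Fin k → Fin r, nOr t = true ↔ ∀ i, (t i : ℕ) = 0)
    (V : Type) [DecidableEq V] (E : Finset (Fin k → V)) (w : (Fin k → V) → ℝ)
    (A : V → Fin r) :
    hVal nOr E w A =
      hVal P (coverEdges E) (coverWeight w) (fun p => A p.1 + a p.2) := by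
  rw [hVal_coverEdges_coverWeight, hVal]
  refine Finset.sum_congr rfl fun e _ => ?_
  rw [← singleton_pred_add_eq_nOr P nOr a hP hnOr]
  rfl

/-- let `P : [r]^k → {0,1}` (with `r ≥ 2`) be the singleton
predicate with support `{(a₁, …, a_k)}` and `nOr` the predicate with support
`{(0, …, 0)}`. For an assignment `A : V → [r]`, define `A^γ` on the vertices
`(v, i)` of the `k`-partite `k`-fold cover by `A^γ(v⁽ⁱ⁾) = A(v) + aᵢ (mod r)`.
Then for every weighted directed `k`-uniform hypergraph `H` on `V`,
`Val_{H,nOr}(A) = Val_{γ(H),P}(A^γ)`. -/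
theorem stmt13 {r k : ℕ} (hr : 2 ≤ r)
    (P nOr : (Fin k → Fin r) → Bool) (a : Fin k → Fin r)
    (hP : ∀ t : Fin k → Fin r, P t = true ↔ t = a)
    (hnOr : ∀ t : Fin k → Fin r, nOr t = true ↔ ∀ i, (t i : ℕ) = 0)
    (V : Type) [Fintype V] [DecidableEq V]
    (E : Finset (Fin k → V)) (hE : ∀ e ∈ E, Function.Injective e)
    (w : (Fin k → V) → ℝ) (hw : ∀ e ∈ E, 0 < w e)
    (A : V → Fin r) :
    hVal nOr E w A =
      hVal P (coverEdges E) (coverWeight w) (fun p => A p.1 + a p.2) :=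
  stmt13_general P nOr a hP hnOr V E w A
end

section
/- Let D be a finite domain with |D| ≥ 2 and let P : D^k → {0,1} be a singleton predicate (its support has exactly one element). Then P contains a singleton k-cube; consequently, for every integer q ≥ 1 the complete k-partite k-uniform hypergraph H on kq vertices V = V₁ ⊔ ... ⊔ V_k with |V_i| = q and hyperedge set {(u₁,...,u_k) : u_i ∈ V_i}, with arbitrary positive weights, has the property that for every 0 < ε < 1 every ε-P-sparsifier H_ε = (V, E_ε, w_ε) of H satisfies |E_ε| ≥ q^k. -/
section Cube

variable {D : Type*} {k : ℕ}

theorem cubeTuple_self (d : Fin k → Fin 2 → D) (i : Fin k → Fin 2) (y : Fin k → D) :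
    cubeTuple k k d i y = fun m => d m (i m) := by
  funext m
  simp [cubeTuple]

theorem containsSingletonCube_of_support_eq {P : (Fin k → D) → Bool} {a b : Fin k → D}
    (ha : ∀ t, P t = true ↔ t = a) (hb : ∀ j, b j ≠ a j) :
    containsSingletonCube k k P := by
  refine ⟨fun j => ![a j, b j], fun _ => 0, Equiv.refl _, fun j => (hb j).symm, ⟨a, ?_⟩, ?_⟩
  · simp [cubeTuple_self, ha]
  · intro y i hP
    simp only [Equiv.refl_apply, cubeTuple_self, ha] at hP
    funext j
    by_contra hne
    have hj := congrFun hP j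
    simp only [Fin.eq_one_of_ne_zero _ hne, Matrix.cons_val_one, Matrix.cons_val_fin_one] at hj
    exact hb j hj

end Cube

section Sparsifier

variable {W D : Type*} {k : ℕ} {P : (Fin k → D) → Bool}

theorem exists_mem_sat_of_hVal_pos {E : Finset (Fin k → W)} {w : (Fin k → W) → ℝ}
    {A : W → D} (h : 0 < hVal P E w A) : ∃ e ∈ E, P (fun i => A (e i)) = true := by
  by_contra! hnone
  refine h.ne' (Finset.sum_eq_zero fun e he => ?_)
  simp [hnone e he]

theorem hVal_pos_of_mem_sat {E : Finset (Fin k → W)} {w : (Fin k → W) → ℝ} {A : W → D}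
    (hw : ∀ e ∈ E, 0 < w e) {e : Fin k → W} (he : e ∈ E)
    (hsat : P (fun i => A (e i)) = true) : 0 < hVal P E w A := by
  refine Finset.sum_pos' (fun e' he' => ?_) ⟨e, he, by simpa [hsat] using hw e he⟩
  have := hw e' he'
  positivity

theorem mem_of_unique_sat {E Eε : Finset (Fin k → W)} {w wε : (Fin k → W) → ℝ} {ε : ℝ}
    {A : W → D} (hε : ε < 1) (hw : ∀ e ∈ E, 0 < w e)
    (hlow : (1 - ε) * hVal P E w A ≤ hVal P Eε wε A) {e : Fin k → W} (he : e ∈ E)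
    (hsat : P (fun i => A (e i)) = true)
    (huniq : ∀ e' ∈ Eε, P (fun i => A (e' i)) = true → e' = e) : e ∈ Eε := by
  have hpos : 0 < hVal P Eε wε A :=
    lt_of_lt_of_le (mul_pos (by linarith) (hVal_pos_of_mem_sat hw he hsat)) hlow
  obtain ⟨e', he', hsat'⟩ := exists_mem_sat_of_hVal_pos hpos
  exact huniq e' he' hsat' ▸ he'

end Sparsifier

section Partite

variable {k q : ℕ}

def partiteEdge (u : Fin k → Fin q) : Fin k → Fin k × Fin q := fun i => (i, u i)

theorem partiteEdge_injective : Function.Injective (partiteEdge (k := k) (q := q)) :=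
  fun _ _ h => funext fun i => (Prod.ext_iff.mp (congrFun h i)).2

theorem card_image_partiteEdge :
    (Finset.univ.image (partiteEdge (k := k) (q := q))).card = q ^ k := by
  simp [Finset.card_image_of_injective _ partiteEdge_injective]

def indicatorAssignment {D : Type*} (a b : Fin k → D) (u : Fin k → Fin q) :
    Fin k × Fin q → D :=
  fun p => if p.2 = u p.1 then a p.1 else b p.1

theorem indicatorAssignment_partiteEdge_eq_iff {D : Type*} {a b : Fin k → D}
    (hb : ∀ j, b j ≠ a j) (u v : Fin k → Fin q) :
    (fun i => indicatorAssignment a b u (partiteEdge v i)) = a ↔ v = u := by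
  constructor
  · intro h
    funext i
    by_contra hne
    exact hb i (by simpa [indicatorAssignment, partiteEdge, hne] using congrFun h i)
  · rintro rfl
    funext i
    simp [indicatorAssignment, partiteEdge]

theorem image_partiteEdge_subset_of_sparsifier {D : Type*} {P : (Fin k → D) → Bool}
    {a b : Fin k → D} (ha : ∀ t, P t = true ↔ t = a) (hb : ∀ j, b j ≠ a j)
    {w wε : (Fin k → Fin k × Fin q) → ℝ} {ε : ℝ} {Eε : Finset (Fin k → Fin k × Fin q)}
    (hε : ε < 1) (hw : ∀ e ∈ Finset.univ.image partiteEdge, 0 < w e)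
    (hsub : Eε ⊆ Finset.univ.image partiteEdge)
    (hlow : ∀ A, (1 - ε) * hVal P (Finset.univ.image partiteEdge) w A ≤ hVal P Eε wε A) :
    Finset.univ.image partiteEdge ⊆ Eε := by
  intro e he
  obtain ⟨u, -, rfl⟩ := Finset.mem_image.mp he
  have hsat : ∀ v, P (fun i => indicatorAssignment a b u (partiteEdge v i)) = true ↔ v = u :=
    fun v => (ha _).trans (indicatorAssignment_partiteEdge_eq_iff hb u v)
  refine mem_of_unique_sat hε hw (hlow _) he ((hsat u).mpr rfl) fun e' he' hsat' => ?_
  obtain ⟨v, -, rfl⟩ := Finset.mem_image.mp (hsub he')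
  rw [(hsat v).mp hsat']

end Partite

theorem stmt14_general {D : Type} [Fintype D] (hD : 2 ≤ Fintype.card D)
    {k : ℕ} (P : (Fin k → D) → Bool)
    (hsing : ∃ a : Fin k → D, ∀ t : Fin k → D, P t = true ↔ t = a) :
    containsSingletonCube k k P ∧
    ∀ q : ℕ, 1 ≤ q →
      ∀ (E : Finset (Fin k → Fin k × Fin q)),
        E = Finset.univ.image
          (fun u : Fin k → Fin q => fun i : Fin k => (i, u i)) →
      ∀ (w : (Fin k → Fin k × Fin q) → ℝ), (∀ e ∈ E, 0 < w e) →
      ∀ ε : ℝ, 0 < ε → ε < 1 →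
      ∀ (Eε : Finset (Fin k → Fin k × Fin q)) (wε : (Fin k → Fin k × Fin q) → ℝ),
        Eε ⊆ E → (∀ e ∈ Eε, 0 < wε e) →
        (∀ A : Fin k × Fin q → D,
          (1 - ε) * hVal P E w A ≤ hVal P Eε wε A ∧
          hVal P Eε wε A ≤ (1 + ε) * hVal P E w A) →
        q ^ k ≤ Eε.card := by
  have : Nontrivial D := Fintype.one_lt_card_iff_nontrivial.mp hD
  obtain ⟨a, ha⟩ := hsing
  choose b hb using fun j => exists_ne (a j)
  refine ⟨containsSingletonCube_of_support_eq ha hb, ?_⟩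
  rintro q - E rfl w hw ε - hε Eε wε hsub - hsp
  calc q ^ k = (Finset.univ.image (partiteEdge (k := k) (q := q))).card :=
        card_image_partiteEdge.symm
    _ ≤ Eε.card := Finset.card_le_card <|
        image_partiteEdge_subset_of_sparsifier ha hb hε hw hsub fun A => (hsp A).1

/-- a singleton predicate `P : D^k → {0,1}` on a domain with
`|D| ≥ 2` contains a singleton `k`-cube; consequently, for the complete
`k`-partite `k`-uniform hypergraph on `kq` vertices (parts `V_i = {i} × Fin q`,
hyperedges all `(u₁, …, u_k)` with `u_i ∈ V_i`, arbitrary positive weights),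
every ε-P-sparsifier has at least `q^k` hyperedges. -/
theorem stmt14 {D : Type} [Fintype D] [DecidableEq D] (hD : 2 ≤ Fintype.card D)
    {k : ℕ} (P : (Fin k → D) → Bool)
    (hsing : ∃ a : Fin k → D, ∀ t : Fin k → D, P t = true ↔ t = a) :
    containsSingletonCube k k P ∧
    ∀ q : ℕ, 1 ≤ q →
      ∀ (E : Finset (Fin k → Fin k × Fin q)),
        E = Finset.univ.image
          (fun u : Fin k → Fin q => fun i : Fin k => (i, u i)) →
      ∀ (w : (Fin k → Fin k × Fin q) → ℝ), (∀ e ∈ E, 0 < w e) →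
      ∀ ε : ℝ, 0 < ε → ε < 1 →
      ∀ (Eε : Finset (Fin k → Fin k × Fin q)) (wε : (Fin k → Fin k × Fin q) → ℝ),
        Eε ⊆ E → (∀ e ∈ Eε, 0 < wε e) →
        (∀ A : Fin k × Fin q → D,
          (1 - ε) * hVal P E w A ≤ hVal P Eε wε A ∧
          hVal P Eε wε A ≤ (1 + ε) * hVal P E w A) →
        q ^ k ≤ Eε.card :=
  stmt14_general hD P hsing
end

section
/- Let r ≥ 2, k ≥ 3, and let Par : [r]^k → {0,1} be the k-ary parity predicate defined by Par(x₁,...,x_k) = 1 if and only if x₁ + ... + x_k ≡ 0 (mod 2), where [r] = {0,...,r−1}. Then for every ℓ with 2 ≤ ℓ ≤ k, Par does not contain a singleton ℓ-cube. -/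
/-- The `k`-ary parity predicate on `[r]`: `Par(x₁, …, x_k) = 1` iff
`x₁ + ⋯ + x_k ≡ 0 (mod 2)`. -/
def parityPred (r k : ℕ) : (Fin k → Fin r) → Bool :=
  fun t => decide ((∑ i, (t i : ℕ)) % 2 = 0)


/-! With the coordinates outside the cube fixed, the parity of a cube vertex `i ∈ {0,1}^ℓ` is
`∑ j, (d j (i j) mod 2)` plus a constant, an affine function of `i` over `ZMod 2`. An affine map
`(ZMod 2)^ℓ → ZMod 2` with `ℓ ≥ 2` has a nonzero vector in the kernel of its linear part, so the
satisfied vertex `n` shares its parity with some other vertex, which is then satisfied too. -/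

open Finset

theorem ZMod.two_apply_add (f : ZMod 2 → ZMod 2) (b e : ZMod 2) :
    f (b + e) = f b + e * (f 1 - f 0) := by
  revert f b e; decide

theorem exists_ne_sum_apply_eq {ι : Type*} [Fintype ι] [Nontrivial ι]
    (a : ι → ZMod 2 → ZMod 2) (n : ι → ZMod 2) :
    ∃ i ≠ n, ∑ j, a j (i j) = ∑ j, a j (n j) := by
  let φ := Fintype.linearCombination (ZMod 2) (fun j => a j 1 - a j 0)
  have hker : LinearMap.ker φ ≠ ⊥ :=
    LinearMap.ker_ne_bot_of_finrank_lt (by simpa using Fintype.one_lt_card)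
  obtain ⟨v, hv, hv0⟩ := Submodule.exists_mem_ne_zero_of_ne_bot hker
  refine ⟨n + v, by simpa using hv0, ?_⟩
  rw [LinearMap.mem_ker, Fintype.linearCombination_apply] at hv
  simp only [Pi.add_apply, ZMod.two_apply_add, sum_add_distrib, smul_eq_mul] at hv ⊢
  rw [hv, add_zero]

theorem parityPred_eq_true_iff {r k : ℕ} (t : Fin k → Fin r) :
    parityPred r k t = true ↔ ∑ m, ((t m : ℕ) : ZMod 2) = 0 := by
  rw [parityPred, decide_eq_true_iff, ← Nat.cast_sum, ZMod.natCast_eq_zero_iff,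
    Nat.dvd_iff_mod_eq_zero]

theorem sum_cubeTuple {D M : Type*} [AddCommMonoid M] {k ℓ : ℕ} (hℓ : ℓ ≤ k) (f : D → M)
    (d : Fin ℓ → Fin 2 → D) (i : Fin ℓ → Fin 2) (y : Fin k → D) :
    ∑ m, f (cubeTuple k ℓ d i y m) =
      ∑ j, f (d j (i j)) + ∑ m : Fin k with ¬ m.val < ℓ, f (y m) := by
  rw [← sum_filter_add_sum_filter_not univ (fun m : Fin k => (m : ℕ) < ℓ)]
  congr 1
  · have hlow : univ.filter (fun m : Fin k => (m : ℕ) < ℓ) = univ.map (Fin.castLEEmb hℓ) := by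
      ext m
      simpa using ⟨fun hm => ⟨⟨m, hm⟩, rfl⟩, fun ⟨j, hj⟩ => hj ▸ j.isLt⟩
    rw [hlow, sum_map]
    exact sum_congr rfl fun j _ => by simp [cubeTuple]
  · exact sum_congr rfl fun m hm => by simp [cubeTuple, (mem_filter.mp hm).2]

theorem parityPred_cubeTuple_eq {r k ℓ : ℕ} (hℓ : ℓ ≤ k) (d : Fin ℓ → Fin 2 → Fin r)
    (σ : Equiv.Perm (Fin k)) (y : Fin k → Fin r) {i n : Fin ℓ → Fin 2}
    (h : ∑ j, ((d j (i j) : ℕ) : ZMod 2) = ∑ j, ((d j (n j) : ℕ) : ZMod 2)) :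
    parityPred r k (fun m => cubeTuple k ℓ d i y (σ m)) =
      parityPred r k (fun m => cubeTuple k ℓ d n y (σ m)) := by
  let parity (a : Fin r) : ZMod 2 := (a : ℕ)
  rw [Bool.eq_iff_iff, parityPred_eq_true_iff, parityPred_eq_true_iff,
    Equiv.sum_comp σ (fun m => parity (cubeTuple k ℓ d i y m)),
    Equiv.sum_comp σ (fun m => parity (cubeTuple k ℓ d n y m)),
    sum_cubeTuple hℓ parity, sum_cubeTuple hℓ parity, h]

theorem stmt15_general {r k : ℕ} :
    ∀ ℓ : ℕ, 2 ≤ ℓ → ℓ ≤ k → ¬ containsSingletonCube k ℓ (parityPred r k) := by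
  rintro ℓ hℓ hℓk ⟨d, n, σ, -, ⟨x, hx⟩, hsingleton⟩
  have : Nontrivial (Fin ℓ) := Fin.nontrivial_iff_two_le.mpr hℓ
  -- `Fin 2` and `ZMod 2` are definitionally equal.
  obtain ⟨i, hin, hsum⟩ := exists_ne_sum_apply_eq (fun j b => ((d j b : ℕ) : ZMod 2)) n
  exact hin (hsingleton x i (by rw [parityPred_cubeTuple_eq hℓk d σ x hsum]; exact hx))

/-- for `r ≥ 2` and `k ≥ 3`, the `k`-ary parity predicate on
`[r]` does not contain a singleton `ℓ`-cube for any `2 ≤ ℓ ≤ k`. -/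
theorem stmt15 {r k : ℕ} (hr : 2 ≤ r) (hk : 3 ≤ k) :
    ∀ ℓ : ℕ, 2 ≤ ℓ → ℓ ≤ k → ¬ containsSingletonCube k ℓ (parityPred r k) :=
  stmt15_general
end
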